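/- Let G be a finite group and k a field whose characteristic is zero or coprime to |G|. Let E be the exterior algebra over k on ∂_1,…,∂_s, Z^s-graded with deg ∂_i = −e_i, and let K be a finite G-equivariant Z^s-complex (a finite Z^s-complex with a k-linear G-action preserving each graded component and commuting with the E-action, G acting trivially on E). If K admits a finite filtration by G-stable Z^s-graded E-submodules whose successive quotients are isomorphic, as G-equivariant graded E-modules, to E(W_i)[d_i] for finite-dimensional k[G]-modules W_i and shifts d_i ∈ Z^s (i = 1,…,r), then K ≅ E(W_1)[d_1] ⊕ ⋯ ⊕ E(W_r)[d_r] as G-equivariant Z^s-graded E-modules. -/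

import Mathlib

open scoped BigOperators

noncomputable section
open Classical

section ZsComplex

variable (K : Type) [Field K] (s : ℕ) {M : Type} [AddCommGroup M] [Module K M]

/-- A submodule `N` of a `ℤ^s`-graded module with graded pieces `comp c` is graded
(homogeneous) if it is generated by its homogeneous components. -/
def IsGr (comp : (Fin s → ℤ) → Submodule K M) (N : Submodule K M) : Prop :=
  N = ⨆ c : Fin s → ℤ, N ⊓ comp c

/-- The subquotient `A/B` (for graded `E`-submodules `B ≤ A` of a `ℤ^s`-complex with
graded pieces `comp` and differentials `D i` of degree `-e_i`) is a **Boolean**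
`ℤ^s`-complex: its support is a translate `d' + {0,1}^s` of the unit box, and each
`∂_i` induces an isomorphism between any two nonzero components of `A/B`.  (For a
`G`-equivariant complex this says exactly that `A/B ≅ E(W)[d]` as `G`-equivariant graded
`E`-modules, where `W` is the `k[G]`-module sitting in the top corner of the box.) -/
def IsBooleanSubq (comp : (Fin s → ℤ) → Submodule K M) (D : Fin s → M →ₗ[K] M)
    (B A : Submodule K M) : Prop :=
  ∃ d' : Fin s → ℤ,
    (∀ c : Fin s → ℤ,
      (¬ A ⊓ comp c ≤ B) ↔ ∃ t : Fin s → Bool, c = d' + fun j => if t j then 1 else 0) ∧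
    (∀ (i : Fin s) (c : Fin s → ℤ), (¬ A ⊓ comp c ≤ B) →
      (¬ A ⊓ comp (c - Pi.single i 1) ≤ B) →
      (∀ x ∈ A ⊓ comp c, D i x ∈ B → x ∈ B) ∧
      (∀ y ∈ A ⊓ comp (c - Pi.single i 1), ∃ x ∈ A ⊓ comp c, y - D i x ∈ B))

end ZsComplex

/-! Each Boolean subquotient `N_{j+1}/N_j` splits off equivariantly. By Maschke's theorem the
top corner of its box, in degree `d + 1`, has a `G`-stable complement `W` to `N_j`. Because the
`∂_i` square to zero and anticommute, the degree-`c` part of the `E`-submodule generated by `W` is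
the image of `W` under a single monomial `∂_{i_1} ⋯ ∂_{i_k}`, and walking down the box along the
isomorphisms `∂_i` of the subquotient shows that this submodule meets `N_j` trivially and fills
`N_{j+1}` modulo `N_j`. Complements of the steps of a filtration form an internal direct sum. -/

section AnticommutingProducts

variable {R ι : Type*} [Ring R] {a : ι → R}

theorem prod_map_eq_or_eq_neg_of_perm (hanti : ∀ i j, i ≠ j → a i * a j + a j * a i = 0)
    {l l' : List ι} (h : l.Perm l') :
    (l.map a).prod = (l'.map a).prod ∨ (l.map a).prod = -(l'.map a).prod := by
  induction h with
  | nil => exact .inl rfl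
  | cons x _ ih => rcases ih with ih | ih <;> simp [ih]
  | swap x y l =>
    by_cases hxy : x = y
    · subst hxy; exact .inl rfl
    · right
      simp only [List.map_cons, List.prod_cons]
      rw [← mul_assoc, ← mul_assoc, eq_neg_of_add_eq_zero_left (hanti x y hxy), neg_mul, neg_neg]
  | trans _ _ ih₁ ih₂ => rcases ih₁ with h₁ | h₁ <;> rcases ih₂ with h₂ | h₂ <;> simp [h₁, h₂]

theorem prod_map_eq_zero_of_not_nodup (hsq : ∀ i, a i * a i = 0)
    (hanti : ∀ i j, i ≠ j → a i * a j + a j * a i = 0) {l : List ι} (h : ¬ l.Nodup) :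
    (l.map a).prod = 0 := by
  obtain ⟨x, hx⟩ : ∃ x, List.Sublist [x, x] l := by simpa [List.nodup_iff_sublist] using h
  obtain ⟨l', hl'⟩ := hx.exists_perm_append
  rcases prod_map_eq_or_eq_neg_of_perm hanti hl' with h' | h' <;> simp [h', ← mul_assoc, hsq]

end AnticommutingProducts

theorem natCast_ne_zero_of_ringChar {R : Type*} [NonAssocSemiring R] [Nontrivial R] {n : ℕ}
    (hn : n ≠ 0) (hchar : ringChar R = 0 ∨ Nat.Coprime (ringChar R) n) : (n : R) ≠ 0 := by
  intro h
  have hdvd : ringChar R ∣ n := (ringChar.spec R n).mp h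
  rcases hchar with h0 | hcop
  · exact hn (zero_dvd_iff.mp (h0 ▸ hdvd))
  · exact CharP.ringChar_ne_one (hcop.eq_one_of_dvd hdvd)

theorem exists_stable_complement_of_inf {K G M : Type*} [Field K] [Group G] [Finite G]
    [NeZero (Nat.card G : K)] [AddCommGroup M] [Module K M] (ρ : Representation K G M)
    {U V : Submodule K M} (hU : ∀ g, U.map (ρ g) ≤ U) (hV : ∀ g, V.map (ρ g) ≤ V) :
    ∃ W ≤ V, (∀ g, W.map (ρ g) ≤ W) ∧ Disjoint W U ∧ V ≤ U ⊔ W := by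
  obtain ⟨X, hX⟩ := exists_isCompl (⟨V ⊓ U, fun g _ hv =>
    ⟨hV g ⟨_, hv.1, rfl⟩, hU g ⟨_, hv.2, rfl⟩⟩⟩ : Subrepresentation ρ)
  have hdisj : V ⊓ U ⊓ X.toSubmodule = ⊥ :=
    congrArg Subrepresentation.toSubmodule hX.inf_eq_bot
  have hcodisj : V ⊓ U ⊔ X.toSubmodule = ⊤ :=
    congrArg Subrepresentation.toSubmodule hX.sup_eq_top
  refine ⟨X.toSubmodule ⊓ V, inf_le_right, fun g => ?_, ?_, ?_⟩
  · exact (Submodule.map_inf_le _).trans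
      (inf_le_inf (fun _ ⟨_, hv, hgv⟩ => hgv ▸ X.apply_mem_toSubmodule g hv) (hV g))
  · rw [disjoint_iff, inf_assoc, inf_comm, hdisj]
  · calc V = (V ⊓ U ⊔ X.toSubmodule) ⊓ V := by rw [hcodisj, top_inf_eq]
      _ = V ⊓ U ⊔ X.toSubmodule ⊓ V := sup_inf_assoc_of_le _ inf_le_left
      _ ≤ U ⊔ X.toSubmodule ⊓ V := sup_le_sup_right inf_le_right _

theorem iSupIndep_of_disjoint_iSup_lt {R N ι : Type*} [Ring R] [AddCommGroup N] [Module R N]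
    [LinearOrder ι] {p : ι → Submodule R N} (h : ∀ j, Disjoint (p j) (⨆ k < j, p k)) :
    iSupIndep p := by
  rw [iSupIndep_iff_finsetSum_eq_zero_imp_eq_zero]
  intro S
  induction S using Finset.induction_on_max with
  | empty => simp
  | insert j S hlt ih =>
    intro v hv hsum
    have hjS : j ∉ S := fun hj => lt_irrefl j (hlt j hj)
    rw [Finset.sum_insert hjS] at hsum
    have hj : v j = 0 := by
      rw [add_eq_zero_iff_eq_neg] at hsum
      refine Submodule.disjoint_def.mp (h j) _ (hv j (Finset.mem_insert_self j S)) ?_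
      rw [hsum, Submodule.neg_mem_iff]
      exact Submodule.sum_mem _ fun k hk =>
        Submodule.mem_iSup_of_mem k (Submodule.mem_iSup_of_mem (hlt k hk)
          (hv k (Finset.mem_insert_of_mem hk)))
    rw [hj, zero_add] at hsum
    have hS := ih v (fun k hk => hv k (Finset.mem_insert_of_mem hk)) hsum
    exact fun k hk => (Finset.mem_insert.mp hk).elim (· ▸ hj) (hS k)

theorem iSupIndep_and_iSup_eq_of_filtration {R M : Type*} [Ring R] [AddCommGroup M]
    [Module R M] {r : ℕ} {N : Fin (r + 1) → Submodule R M} {P : Fin r → Submodule R M}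
    (hbot : N 0 = ⊥) (hdisj : ∀ j, P j ⊓ N j.castSucc = ⊥)
    (hsup : ∀ j, P j ⊔ N j.castSucc = N j.succ) :
    iSupIndep P ∧ ⨆ j, P j = N (Fin.last r) := by
  have hmono : Monotone N :=
    Fin.monotone_iff_le_succ.mpr fun j => hsup j ▸ le_sup_right
  have hP : ∀ j, P j ≤ N j.succ := fun j => hsup j ▸ le_sup_left
  refine ⟨iSupIndep_of_disjoint_iSup_lt fun j => ?_, le_antisymm ?_ ?_⟩
  · refine (disjoint_iff.mpr (hdisj j)).mono_right (iSup₂_le fun k hk => ?_)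
    exact (hP k).trans (hmono (Fin.succ_le_castSucc_iff.mpr hk))
  · exact iSup_le fun j => (hP j).trans (hmono (Fin.le_last _))
  · induction Fin.last r using Fin.induction with
    | zero => exact hbot ▸ bot_le
    | succ k ih => exact hsup k ▸ sup_le (le_iSup P k) ih

theorem disjoint_iSup_of_le_of_disjoint {R M ι : Type*} [Ring R] [AddCommGroup M] [Module R M]
    {X Y Z : ι → Submodule R M} (hX : iSupIndep X) (hY : ∀ c, Y c ≤ X c)
    (hZ : ∀ c, Z c ≤ X c) (h : ∀ c, Disjoint (Y c) (Z c)) :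
    Disjoint (⨆ c, Y c) (⨆ c, Z c) := by
  rw [Submodule.disjoint_def]
  intro x hxY hxZ
  obtain ⟨f, hf, rfl⟩ := (Submodule.mem_iSup_iff_exists_finsupp Y x).mp hxY
  obtain ⟨g, hg, hgf⟩ := (Submodule.mem_iSup_iff_exists_finsupp Z _).mp hxZ
  have hS₁ : f.support ⊆ f.support ∪ g.support := Finset.subset_union_left
  have hS₂ : g.support ⊆ f.support ∪ g.support := Finset.subset_union_right
  rw [Finsupp.sum_of_support_subset f hS₁ _ (fun _ _ => rfl),
    Finsupp.sum_of_support_subset g hS₂ _ (fun _ _ => rfl)] at hgf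
  have hfg := (iSupIndep_iff_finsetSum_eq_imp_eq X).mp hX _ f g
    (fun c _ => ⟨hY c (hf c), hZ c (hg c)⟩) hgf.symm
  refine Finset.sum_eq_zero fun c hc => Submodule.disjoint_def.mp (h c) _ (hf c) ?_
  rw [hfg c (hS₁ hc)]
  exact hg c

theorem isGr_iSup {K M : Type} [Field K] [AddCommGroup M] [Module K M] {s : ℕ}
    {comp : (Fin s → ℤ) → Submodule K M} {Y : (Fin s → ℤ) → Submodule K M}
    (hY : ∀ c, Y c ≤ comp c) : IsGr K s comp (⨆ c, Y c) :=
  le_antisymm (iSup_mono fun c => le_inf (le_iSup Y c) (hY c)) (iSup_le fun _ => inf_le_left)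

def listCount {s : ℕ} (l : List (Fin s)) : Fin s → ℤ := fun j => (l.count j : ℤ)

@[simp]
theorem listCount_nil {s : ℕ} : listCount ([] : List (Fin s)) = 0 := by
  funext j
  simp [listCount]

theorem listCount_cons {s : ℕ} (i : Fin s) (l : List (Fin s)) :
    listCount (i :: l) = listCount l + Pi.single i 1 := by
  funext j
  by_cases h : j = i
  · subst h; simp [listCount]
  · simp [listCount, h, Ne.symm h]

theorem exists_bool_iff_exists_nodup {s : ℕ} (d c : Fin s → ℤ) :
    (∃ t : Fin s → Bool, c = d + fun j => if t j then 1 else 0) ↔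
      ∃ l : List (Fin s), l.Nodup ∧ c = d + 1 - listCount l := by
  constructor
  · rintro ⟨t, rfl⟩
    have hnd : ((List.finRange s).filter fun j => !t j).Nodup := (List.nodup_finRange s).filter _
    refine ⟨_, hnd, funext fun j => ?_⟩
    cases h : t j <;> simp [listCount, hnd, h, List.count_eq_zero_of_not_mem]
  · rintro ⟨l, hl, rfl⟩
    refine ⟨fun j => decide (j ∉ l), funext fun j => ?_⟩
    by_cases h : j ∈ l <;> simp [listCount, hl, h, List.count_eq_zero]

section ListProducts

variable {R M : Type*} [Ring R] [AddCommGroup M] [Module R M] {s : ℕ}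
  {comp : (Fin s → ℤ) → Submodule R M} {D : Fin s → Module.End R M}

theorem map_listProd_le (hDgr : ∀ i c, (comp c).map (D i) ≤ comp (c - Pi.single i 1))
    (l : List (Fin s)) (c : Fin s → ℤ) :
    (comp c).map (l.map D).prod ≤ comp (c - listCount l) := by
  induction l with
  | nil => simp [Module.End.one_eq_id]
  | cons i l ih =>
    rw [List.map_cons, List.prod_cons, Module.End.mul_eq_comp, Submodule.map_comp,
      listCount_cons, ← sub_sub]
    exact (Submodule.map_mono ih).trans (hDgr i _)

theorem map_listProd_le_self {X : Submodule R M} (hX : ∀ i, X.map (D i) ≤ X)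
    (l : List (Fin s)) : X.map (l.map D).prod ≤ X := by
  refine List.prod_induction (fun f => X.map f ≤ X) (fun f g hf hg => ?_) ?_ ?_
  · rw [Module.End.mul_eq_comp, Submodule.map_comp]
    exact (Submodule.map_mono hg).trans hf
  · simp [Module.End.one_eq_id]
  · simpa using fun i _ => hX i

theorem map_listProd_eq_of_perm (hanti : ∀ i j, i ≠ j → D i * D j + D j * D i = 0)
    {l l' : List (Fin s)} (h : l.Perm l') (V : Submodule R M) :
    V.map (l.map D).prod = V.map (l'.map D).prod := by
  rcases prod_map_eq_or_eq_neg_of_perm hanti h with h' | h' <;> simp [h', Submodule.map_neg]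

end ListProducts

section Box

variable {R M : Type*} [Ring R] [AddCommGroup M] [Module R M] {s : ℕ}
  {comp : (Fin s → ℤ) → Submodule R M} {D : Fin s → Module.End R M}
  {A B V : Submodule R M} {e : Fin s → ℤ}

theorem disjoint_map_listProd_of_nodup
    (hDgr : ∀ i c, (comp c).map (D i) ≤ comp (c - Pi.single i 1)) (hAD : ∀ i, A.map (D i) ≤ A)
    (hbox : ∀ l : List (Fin s), l.Nodup → ¬ A ⊓ comp (e - listCount l) ≤ B)
    (hinj : ∀ i c, ¬ A ⊓ comp c ≤ B → ¬ A ⊓ comp (c - Pi.single i 1) ≤ B →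
      ∀ x ∈ A ⊓ comp c, D i x ∈ B → x ∈ B)
    (hV : V ≤ A ⊓ comp e) (hVB : Disjoint V B) {l : List (Fin s)} (hl : l.Nodup) :
    Disjoint (V.map (l.map D).prod) B := by
  induction l with
  | nil => simpa [Module.End.one_eq_id] using hVB
  | cons i l ih =>
    obtain ⟨-, hl'⟩ := List.nodup_cons.mp hl
    have hdeg : e - listCount l - Pi.single i 1 = e - listCount (i :: l) := by
      rw [listCount_cons, sub_sub]
    rw [List.map_cons, List.prod_cons, Module.End.mul_eq_comp, Submodule.map_comp,
      Submodule.disjoint_def]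
    rintro _ ⟨y, hy, rfl⟩ hyB
    have hyA : y ∈ A ⊓ comp (e - listCount l) :=
      ⟨map_listProd_le_self hAD l (Submodule.map_mono (hV.trans inf_le_left) hy),
        map_listProd_le hDgr l e (Submodule.map_mono (hV.trans inf_le_right) hy)⟩
    have hy' : y ∈ B := hinj i _ (hbox l hl') (hdeg ▸ hbox _ hl) y hyA hyB
    rw [Submodule.disjoint_def.mp (ih hl') y hy hy', map_zero]

theorem inf_comp_le_sup_map_listProd (hBD : ∀ i, B.map (D i) ≤ B)
    (hbox : ∀ l : List (Fin s), l.Nodup → ¬ A ⊓ comp (e - listCount l) ≤ B)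
    (hsurj : ∀ i c, ¬ A ⊓ comp c ≤ B → ¬ A ⊓ comp (c - Pi.single i 1) ≤ B →
      ∀ y ∈ A ⊓ comp (c - Pi.single i 1), ∃ x ∈ A ⊓ comp c, y - D i x ∈ B)
    (hV : A ⊓ comp e ≤ B ⊔ V) {l : List (Fin s)} (hl : l.Nodup) :
    A ⊓ comp (e - listCount l) ≤ B ⊔ V.map (l.map D).prod := by
  induction l with
  | nil => simpa [Module.End.one_eq_id] using hV
  | cons i l ih =>
    obtain ⟨-, hl'⟩ := List.nodup_cons.mp hl
    have hdeg : e - listCount l - Pi.single i 1 = e - listCount (i :: l) := by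
      rw [listCount_cons, sub_sub]
    intro y hy
    obtain ⟨x, hx, hxy⟩ := hsurj i _ (hbox l hl') (hdeg ▸ hbox _ hl) y (hdeg ▸ hy)
    obtain ⟨b, hb, _, ⟨v, hv, rfl⟩, rfl⟩ := Submodule.mem_sup.mp (ih hl' hx)
    have hy : y = (y - D i (b + (l.map D).prod v) + D i b) + D i ((l.map D).prod v) := by
      rw [map_add]; abel
    rw [hy]
    exact Submodule.add_mem_sup (B.add_mem hxy (hBD i ⟨b, hb, rfl⟩)) ⟨v, hv, rfl⟩

/-- The degree-`c` component of the `E`-submodule generated by `V`, where `V` sits in degree `e`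
and `E` acts through the operators `D i`. -/
def spanComponent (D : Fin s → Module.End R M) (e : Fin s → ℤ) (V : Submodule R M)
    (c : Fin s → ℤ) : Submodule R M :=
  ⨆ (l : List (Fin s)) (_ : e - listCount l = c), V.map (l.map D).prod

theorem map_listProd_le_spanComponent (l : List (Fin s)) :
    V.map (l.map D).prod ≤ spanComponent D e V (e - listCount l) := by
  unfold spanComponent
  exact le_iSup₂_of_le l rfl le_rfl

theorem spanComponent_le_comp (hDgr : ∀ i c, (comp c).map (D i) ≤ comp (c - Pi.single i 1))
    (hV : V ≤ comp e) (c : Fin s → ℤ) : spanComponent D e V c ≤ comp c :=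
  iSup₂_le fun l hl => hl ▸ (Submodule.map_mono hV).trans (map_listProd_le hDgr l e)

theorem spanComponent_le_of_map_le (hAD : ∀ i, A.map (D i) ≤ A) (hV : V ≤ A)
    (c : Fin s → ℤ) : spanComponent D e V c ≤ A :=
  iSup₂_le fun l _ => (Submodule.map_mono hV).trans (map_listProd_le_self hAD l)

theorem map_spanComponent_le (i : Fin s) (c : Fin s → ℤ) :
    (spanComponent D e V c).map (D i) ≤ spanComponent D e V (c - Pi.single i 1) := by
  simp only [spanComponent, Submodule.map_iSup]
  refine iSup₂_le fun l hl => ?_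
  have hdeg : e - listCount (i :: l) = c - Pi.single i 1 := by
    rw [listCount_cons, ← hl, sub_sub]
  rw [← Submodule.map_comp, ← Module.End.mul_eq_comp, ← List.prod_cons, ← List.map_cons, ← hdeg]
  exact map_listProd_le_spanComponent (i :: l)

theorem map_spanComponent_le_of_commute {g : Module.End R M} (hg : ∀ i, Commute g (D i))
    (hV : V.map g ≤ V) (c : Fin s → ℤ) :
    (spanComponent D e V c).map g ≤ spanComponent D e V c := by
  simp only [spanComponent, Submodule.map_iSup]
  refine iSup₂_mono fun l _ => ?_
  have hcomm : Commute g (l.map D).prod :=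
    Commute.list_prod_right _ _ fun _ hx => by
      obtain ⟨i, -, rfl⟩ := List.mem_map.mp hx
      exact hg i
  rw [← Submodule.map_comp, ← Module.End.mul_eq_comp, hcomm.eq, Module.End.mul_eq_comp,
    Submodule.map_comp]
  exact Submodule.map_mono hV

theorem spanComponent_le_map_listProd (hanti : ∀ i j, i ≠ j → D i * D j + D j * D i = 0)
    {l : List (Fin s)} {c : Fin s → ℤ} (hl : e - listCount l = c) :
    spanComponent D e V c ≤ V.map (l.map D).prod := by
  refine iSup₂_le fun l' hl' => (map_listProd_eq_of_perm hanti ?_ V).le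
  refine List.perm_iff_count.mpr fun j => ?_
  have := congrFun (hl'.trans hl.symm) j
  simpa [listCount] using this

theorem disjoint_spanComponent
    (hDgr : ∀ i c, (comp c).map (D i) ≤ comp (c - Pi.single i 1)) (hAD : ∀ i, A.map (D i) ≤ A)
    (hDsq : ∀ i, D i * D i = 0) (hanti : ∀ i j, i ≠ j → D i * D j + D j * D i = 0)
    (hbox : ∀ l : List (Fin s), l.Nodup → ¬ A ⊓ comp (e - listCount l) ≤ B)
    (hinj : ∀ i c, ¬ A ⊓ comp c ≤ B → ¬ A ⊓ comp (c - Pi.single i 1) ≤ B →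
      ∀ x ∈ A ⊓ comp c, D i x ∈ B → x ∈ B)
    (hV : V ≤ A ⊓ comp e) (hVB : Disjoint V B) (c : Fin s → ℤ) :
    Disjoint (spanComponent D e V c) B := by
  by_cases hc : ∃ l : List (Fin s), e - listCount l = c
  · obtain ⟨l, hl⟩ := hc
    refine Disjoint.mono_left (spanComponent_le_map_listProd hanti hl) ?_
    by_cases hnd : l.Nodup
    · exact disjoint_map_listProd_of_nodup hDgr hAD hbox hinj hV hVB hnd
    · simp [prod_map_eq_zero_of_not_nodup hDsq hanti hnd]
  · rw [not_exists] at hc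
    exact disjoint_bot_left.mono_left (iSup₂_le fun l hl => absurd hl (hc l))

end Box

theorem exists_complement_of_isBooleanSubq {K G M : Type} [Field K] [Group G] [Finite G]
    [NeZero (Nat.card G : K)] [AddCommGroup M] [Module K M] {s : ℕ}
    {comp : (Fin s → ℤ) → Submodule K M} {D : Fin s → Module.End K M}
    (act : Representation K G M) (hind : iSupIndep comp)
    (hDgr : ∀ i c, (comp c).map (D i) ≤ comp (c - Pi.single i 1))
    (hDsq : ∀ i, D i * D i = 0) (hanti : ∀ i j, i ≠ j → D i * D j + D j * D i = 0)
    (hactgr : ∀ g c, (comp c).map (act g) ≤ comp c) (hactD : ∀ g i, Commute (act g) (D i))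
    {A B : Submodule K M} (hBA : B ≤ A) (hAgr : IsGr K s comp A) (hBgr : IsGr K s comp B)
    (hAD : ∀ i, A.map (D i) ≤ A) (hBD : ∀ i, B.map (D i) ≤ B)
    (hAact : ∀ g, A.map (act g) ≤ A) (hBact : ∀ g, B.map (act g) ≤ B)
    (hbool : IsBooleanSubq K s comp D B A) :
    ∃ P : Submodule K M, IsGr K s comp P ∧ (∀ i, P.map (D i) ≤ P) ∧
      (∀ g, P.map (act g) ≤ P) ∧ P ⊓ B = ⊥ ∧ P ⊔ B = A := by
  obtain ⟨d, hsupp, hiso⟩ := hbool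
  have hbox : ∀ l : List (Fin s), l.Nodup → ¬ A ⊓ comp (d + 1 - listCount l) ≤ B :=
    fun l hl => (hsupp _).mpr ((exists_bool_iff_exists_nodup d _).mpr ⟨l, hl, rfl⟩)
  obtain ⟨W, hWV, hWact, hWB, hWsup⟩ := exists_stable_complement_of_inf act hBact
    (V := A ⊓ comp (d + 1)) fun g => (Submodule.map_inf_le _).trans
      (inf_le_inf (hAact g) (hactgr g _))
  have hWe : W ≤ comp (d + 1) := hWV.trans inf_le_right
  have hWA : W ≤ A := hWV.trans inf_le_left
  refine ⟨⨆ c, spanComponent D (d + 1) W c, isGr_iSup (spanComponent_le_comp hDgr hWe),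
    fun i => ?_, fun g => ?_, ?_, ?_⟩
  · rw [Submodule.map_iSup]
    exact iSup_le fun c => (map_spanComponent_le i c).trans (le_iSup _ _)
  · rw [Submodule.map_iSup]
    exact iSup_mono fun c => map_spanComponent_le_of_commute (hactD g) (hWact g) c
  · rw [← disjoint_iff]
    have h := disjoint_iSup_of_le_of_disjoint hind (spanComponent_le_comp hDgr hWe)
      (fun _ => inf_le_right) fun c => (disjoint_spanComponent hDgr hAD hDsq hanti hbox
        (fun i c h h' => (hiso i c h h').1) hWV hWB c).mono_right inf_le_left
    rwa [← hBgr] at h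
  · refine le_antisymm (sup_le (iSup_le (spanComponent_le_of_map_le hAD hWA)) hBA) ?_
    rw [hAgr]
    refine iSup_le fun c => ?_
    by_cases hc : A ⊓ comp c ≤ B
    · exact hc.trans le_sup_right
    obtain ⟨l, hl, rfl⟩ := (exists_bool_iff_exists_nodup d c).mp ((hsupp c).mp hc)
    refine (inf_comp_le_sup_map_listProd hBD hbox (fun i c h h' => (hiso i c h h').2)
      hWsup hl).trans (sup_le le_sup_right (le_sup_of_le_left ?_))
    exact (map_listProd_le_spanComponent l).trans (le_iSup _ _)

theorem statement_19_general (K : Type) [Field K] (s r : ℕ)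
    (G : Type) [Group G] [Fintype G]
    (hchar : ringChar K = 0 ∨ Nat.Coprime (ringChar K) (Fintype.card G))
    (M : Type) [AddCommGroup M] [Module K M]
    (comp : (Fin s → ℤ) → Submodule K M) (D : Fin s → M →ₗ[K] M)
    (act : G →* Module.End K M)
    (hdecomp : DirectSum.IsInternal comp)
    (hDgr : ∀ (i : Fin s) (c : Fin s → ℤ), (comp c).map (D i) ≤ comp (c - Pi.single i 1))
    (hDsq : ∀ i, D i ∘ₗ D i = 0)
    (hanti : ∀ i j, i ≠ j → D i ∘ₗ D j + D j ∘ₗ D i = 0)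
    (hactgr : ∀ (g : G) (c : Fin s → ℤ), (comp c).map (act g) ≤ comp c)
    (hactD : ∀ (g : G) (i : Fin s), act g ∘ₗ D i = D i ∘ₗ act g)
    (N : Fin (r + 1) → Submodule K M) (hmono : Monotone N)
    (hbot : N 0 = ⊥) (htop : N (Fin.last r) = ⊤)
    (hNgr : ∀ j, IsGr K s comp (N j))
    (hND : ∀ j i, (N j).map (D i) ≤ N j)
    (hNact : ∀ j g, (N j).map (act g) ≤ N j)
    (hBool : ∀ j : Fin r, IsBooleanSubq K s comp D (N j.castSucc) (N j.succ)) :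
    ∃ P : Fin r → Submodule K M,
      (∀ j : Fin r, IsGr K s comp (P j) ∧ (∀ i, (P j).map (D i) ≤ P j) ∧
        (∀ g, (P j).map (act g) ≤ P j) ∧
        P j ⊓ N j.castSucc = ⊥ ∧ P j ⊔ N j.castSucc = N j.succ) ∧
      DirectSum.IsInternal P := by
  have : NeZero (Nat.card G : K) := ⟨by
    rw [Nat.card_eq_fintype_card]; exact natCast_ne_zero_of_ringChar Fintype.card_ne_zero hchar⟩
  choose P hPgr hPD hPact hPdisj hPsup using fun j : Fin r =>
    exists_complement_of_isBooleanSubq act hdecomp.submodule_iSupIndep hDgr hDsq hanti hactgr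
      hactD (hmono (Fin.castSucc_le_succ j)) (hNgr _) (hNgr _) (hND _) (hND _) (hNact _)
      (hNact _) (hBool j)
  obtain ⟨hind, hsup⟩ := iSupIndep_and_iSup_eq_of_filtration hbot hPdisj hPsup
  refine ⟨P, fun j => ⟨hPgr j, hPD j, hPact j, hPdisj j, hPsup j⟩, ?_⟩
  rw [DirectSum.isInternal_submodule_iff_iSupIndep_and_iSup_eq_top]
  exact ⟨hind, hsup.trans htop⟩

/-- Let `G` be a finite group and `k` a field of characteristic zero or
coprime to `|G|`.  Let `K` be a finite `G`-equivariant `ℤ^s`-complex (an internally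
`ℤ^s`-graded module `M` with pieces `comp c`, anticommuting square-zero operators `D i`
of degree `-e_i`, and a `G`-action `act` commuting with everything).  If `K` admits a
finite filtration `⊥ = N_0 ≤ ⋯ ≤ N_r = ⊤` by `G`-stable graded `E`-submodules whose
successive quotients are Boolean (i.e. isomorphic as `G`-equivariant graded `E`-modules
to `E(W_j)[d_j]` for `k[G]`-modules `W_j`), then `K` is isomorphic, as a `G`-equivariant
`ℤ^s`-graded `E`-module, to direct sum of those quotients: there are `G`-stable graded
`E`-submodules `P_j` with `P_j ⊕ N_j = N_{j+1}` and `M = P_1 ⊕ ⋯ ⊕ P_r` internally. -/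
theorem statement_19 (K : Type) [Field K] (s r : ℕ)
    (G : Type) [Group G] [Fintype G]
    (hchar : ringChar K = 0 ∨ Nat.Coprime (ringChar K) (Fintype.card G))
    (M : Type) [AddCommGroup M] [Module K M]
    (comp : (Fin s → ℤ) → Submodule K M) (D : Fin s → M →ₗ[K] M)
    (act : G →* Module.End K M)
    (hdecomp : DirectSum.IsInternal comp)
    (hfd : ∀ c, FiniteDimensional K (comp c))
    (hfin : {c | comp c ≠ ⊥}.Finite)
    (hDgr : ∀ (i : Fin s) (c : Fin s → ℤ), (comp c).map (D i) ≤ comp (c - Pi.single i 1))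
    (hDsq : ∀ i, D i ∘ₗ D i = 0)
    (hanti : ∀ i j, i ≠ j → D i ∘ₗ D j + D j ∘ₗ D i = 0)
    (hactgr : ∀ (g : G) (c : Fin s → ℤ), (comp c).map (act g) ≤ comp c)
    (hactD : ∀ (g : G) (i : Fin s), act g ∘ₗ D i = D i ∘ₗ act g)
    (N : Fin (r + 1) → Submodule K M) (hmono : Monotone N)
    (hbot : N 0 = ⊥) (htop : N (Fin.last r) = ⊤)
    (hNgr : ∀ j, IsGr K s comp (N j))
    (hND : ∀ j i, (N j).map (D i) ≤ N j)
    (hNact : ∀ j g, (N j).map (act g) ≤ N j)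
    (hBool : ∀ j : Fin r, IsBooleanSubq K s comp D (N j.castSucc) (N j.succ)) :
    ∃ P : Fin r → Submodule K M,
      (∀ j : Fin r, IsGr K s comp (P j) ∧ (∀ i, (P j).map (D i) ≤ P j) ∧
        (∀ g, (P j).map (act g) ≤ P j) ∧
        P j ⊓ N j.castSucc = ⊥ ∧ P j ⊔ N j.castSucc = N j.succ) ∧
      DirectSum.IsInternal P :=
  statement_19_general K s r G hchar M comp D act hdecomp hDgr hDsq hanti hactgr hactD N hmono hbot
    htop hNgr hND hNact hBool
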